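/- Let A be a permutation of [k], let Γ be a measure on [0,1]², and let {Γ_x} be a disintegration along the first coordinate. Suppose there exist disjoint sets P₁ < P₂ < … < P_k ⊆ [0,1] (each interval P_i lying entirely to the left of P_{i+1}) of positive Lebesgue measure, and disjoint intervals J₁ < J₂ < … < J_k ⊆ [0,1], such that Γ_x(J_j) > 0 for every x ∈ P_i and every i, j ∈ [k]. Then t(A,Γ) ≥ ∏_{i=1}^k ∫_{P_i} Γ_x(J_{A(i)}) dλ(x) > 0. -/

import Mathlib

open MeasureTheory Set ENNReal

/-- Geometric representations of the pattern `A`. -/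
def patternSet {k : ℕ} (A : Equiv.Perm (Fin k)) : Set (Fin k → ℝ × ℝ) :=
  {f | StrictMono (fun i => (f i).1) ∧ ∀ i j : Fin k, A i < A j ↔ (f i).2 < (f j).2}

/-!
The box `∏ i, P i ×ˢ J (A i)` lies inside the pattern set, and by the disintegration its
`i`-th side has `Γ`-mass `∫_{P i} Γx x (J (A i))`, which is positive because the integrand is
positive on a set of positive Lebesgue measure. As `Γ` need not be σ-finite, the bound
"product measure of a box ≥ product of the measures of its sides" has to come directly from
the outer-measure construction of `Measure.pi`: if countably many measurable boxes cover a box,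
their product masses add up to at least that of the box, as one sees by integrating out one
coordinate at a time.
-/

lemma Set.update_mem_insert_pi_iff {ι : Type*} {α : ι → Type*} [DecidableEq ι] {u : Set ι}
    {i : ι} (hi : i ∉ u) (t : ∀ i, Set (α i)) (g : ∀ i, α i) (x : α i) :
    Function.update g i x ∈ (insert i u).pi t ↔ x ∈ t i ∧ g ∈ u.pi t := by
  rw [update_mem_pi_iff, insert_sdiff_self_of_notMem hi]
  simp [and_comm]

section ProductBoxes

variable {ι : Type*} {α : ι → Type*} [∀ i, MeasurableSpace (α i)]

theorem prod_le_tsum_of_one_le_tsum_indicator (μ : ∀ i, Measure (α i))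
    (u : Finset ι) {s : ∀ i, Set (α i)} (hs : ∀ i, (s i).Nonempty)
    {a : ℕ → ∀ i, Set (α i)} (ha : ∀ n i, MeasurableSet (a n i)) (w : ℕ → ℝ≥0∞)
    (hcov : ∀ g ∈ (u : Set ι).pi s,
      1 ≤ ∑' n, ((u : Set ι).pi (a n)).indicator (fun _ => w n) g) :
    ∏ i ∈ u, μ i (s i) ≤ ∑' n, w n * ∏ i ∈ u, μ i (a n i) := by
  classical
  induction u using Finset.induction_on generalizing w with
  | empty =>
    simpa using hcov (fun i => (hs i).some) (by simp)
  | @insert i₀ u hi₀ IH =>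
    rw [Finset.coe_insert] at hcov
    let F : ℕ → α i₀ → ℝ≥0∞ := fun n => (a n i₀).indicator fun _ => w n * ∏ i ∈ u, μ i (a n i)
    have hF : ∀ n, Measurable (F n) := fun n => measurable_const.indicator (ha n i₀)
    have hslice : ∀ x ∈ s i₀, ∏ i ∈ u, μ i (s i) ≤ ∑' n, F n x := by
      intro x hx
      simp_rw [F, indicator_mul_left]
      refine IH (fun n => (a n i₀).indicator (fun _ => w n) x) fun g hg => ?_
      have hupdate := fun t => Set.update_mem_insert_pi_iff (Finset.mem_coe.not.2 hi₀) t g x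
      refine (hcov _ ((hupdate s).2 ⟨hx, hg⟩)).trans_eq (tsum_congr fun n => ?_)
      by_cases hxn : x ∈ a n i₀ <;> simp [-insert_pi, indicator_apply, hupdate, hxn]
    calc ∏ i ∈ insert i₀ u, μ i (s i) = ∫⁻ _ in s i₀, ∏ i ∈ u, μ i (s i) ∂μ i₀ := by
          rw [setLIntegral_const, Finset.prod_insert hi₀, mul_comm]
      _ ≤ ∫⁻ x in s i₀, ∑' n, F n x ∂μ i₀ := setLIntegral_mono (Measurable.tsum hF) hslice
      _ = ∑' n, ∫⁻ x in s i₀, F n x ∂μ i₀ := lintegral_tsum fun n => (hF n).aemeasurable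
      _ ≤ ∑' n, w n * ∏ i ∈ insert i₀ u, μ i (a n i) := by
          refine ENNReal.tsum_le_tsum fun n => ?_
          rw [lintegral_indicator_const (ha n i₀), Finset.prod_insert hi₀]
          calc _ ≤ w n * (∏ i ∈ u, μ i (a n i)) * μ i₀ (a n i₀) := by
                gcongr
                exact Measure.restrict_le_self
            _ = _ := by ring

theorem prod_le_pi_univ_pi [Fintype ι] (μ : ∀ i, Measure (α i)) (s : ∀ i, Set (α i)) :
    ∏ i, μ i (s i) ≤ Measure.pi μ (univ.pi s) := by
  classical
  by_cases hs : ∀ i, (s i).Nonempty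
  swap
  · obtain ⟨i, hi⟩ := not_forall.1 hs
    have hzero : ∏ i, μ i (s i) = 0 := Finset.prod_eq_zero (Finset.mem_univ i)
      (by rw [not_nonempty_iff_eq_empty.1 hi, measure_empty])
    simp [hzero]
  rw [Measure.pi_def]
  refine le_trans ?_ (le_toMeasure_apply _ _ _)
  rw [OuterMeasure.pi, OuterMeasure.boundedBy_apply]
  refine le_iInf₂ fun t ht => ?_
  let a : ℕ → ∀ i, Set (α i) := fun n i => toMeasurable (μ i) (Function.eval i '' t n)
  -- `boundedBy` does not charge the empty pieces of the cover, so neither may `w`.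
  let w : ℕ → ℝ≥0∞ := {n | (t n).Nonempty}.indicator 1
  have hcov : ∀ g ∈ ((Finset.univ : Finset ι) : Set ι).pi s,
      1 ≤ ∑' n, (((Finset.univ : Finset ι) : Set ι).pi (a n)).indicator (fun _ => w n) g := by
    intro g hg
    obtain ⟨n, hn⟩ := mem_iUnion.1 (ht (by simpa using hg))
    refine le_trans ?_ (ENNReal.le_tsum n)
    have hga : g ∈ ((Finset.univ : Finset ι) : Set ι).pi (a n) :=
      fun i _ => subset_toMeasurable _ _ ⟨g, hn, rfl⟩
    rw [indicator_of_mem hga]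
    exact (indicator_of_mem (show n ∈ {n | (t n).Nonempty} from ⟨g, hn⟩) (1 : ℕ → ℝ≥0∞)).ge
  calc ∏ i, μ i (s i) ≤ ∑' n, w n * ∏ i, μ i (a n i) :=
        prod_le_tsum_of_one_le_tsum_indicator μ Finset.univ hs
          (fun n i => measurableSet_toMeasurable _ _) w hcov
    _ ≤ ∑' n, ⨆ _ : (t n).Nonempty, piPremeasure (fun i => (μ i).toOuterMeasure) (t n) := by
        refine ENNReal.tsum_le_tsum fun n => ?_
        by_cases hn : (t n).Nonempty
        · simp [hn, w, a, piPremeasure, measure_toMeasurable]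
        · simp [hn, w]

end ProductBoxes

theorem pi_prod_subset_patternSet {k : ℕ} (A : Equiv.Perm (Fin k)) {P J : Fin k → Set ℝ}
    (hP : ∀ i j : Fin k, i < j → ∀ a ∈ P i, ∀ b ∈ P j, a < b)
    (hJ : ∀ i j : Fin k, i < j → ∀ a ∈ J i, ∀ b ∈ J j, a < b) :
    univ.pi (fun i => P i ×ˢ J (A i)) ⊆ patternSet A := by
  intro f hf
  simp only [mem_pi, mem_univ, mem_prod, forall_const] at hf
  have hy : StrictMono fun j => (f (A.symm j)).2 := fun j j' hjj' =>
    hJ j j' hjj' _ (by simpa using (hf (A.symm j)).2) _ (by simpa using (hf (A.symm j')).2)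
  refine ⟨fun i j hij => hP i j hij _ (hf i).1 _ (hf j).1, fun i j => ?_⟩
  simpa using (hy.lt_iff_lt (a := A i) (b := A j)).symm

theorem measure_prod_eq_setLIntegral_of_disintegration {α β : Type*} [MeasurableSpace α]
    [MeasurableSpace β] {ν : Measure α} {S : Set α} {Γ : Measure (α × β)} {Γx : α → Measure β}
    (hdis : ∀ B : Set (α × β), MeasurableSet B → Γ B = ∫⁻ x in S, Γx x {y | (x, y) ∈ B} ∂ν)
    {P : Set α} {J : Set β} (hP : MeasurableSet P) (hJ : MeasurableSet J) (hPS : P ⊆ S) :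
    Γ (P ×ˢ J) = ∫⁻ x in P, Γx x J ∂ν := by
  have hfiber : (fun x => Γx x {y | (x, y) ∈ P ×ˢ J}) = P.indicator fun x => Γx x J := by
    ext x
    by_cases hx : x ∈ P <;> simp [hx]
  rw [hdis _ (hP.prod hJ), hfiber, lintegral_indicator hP, Measure.restrict_restrict hP,
    inter_eq_self_of_subset_left hPS]

theorem stmt6_general (k : ℕ) (A : Equiv.Perm (Fin k)) (Γ : Measure (ℝ × ℝ))
    (Γx : ℝ → Measure ℝ) (hmeas : Measurable Γx)
    (hdis : ∀ B : Set (ℝ × ℝ), MeasurableSet B →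
      Γ B = ∫⁻ x in Icc (0 : ℝ) 1, Γx x {y | (x, y) ∈ B})
    (P : Fin k → Set ℝ) (hPm : ∀ i, MeasurableSet (P i))
    (hPsub : ∀ i, P i ⊆ Icc 0 1) (hPpos : ∀ i, 0 < volume (P i))
    (hPord : ∀ i j : Fin k, i < j → ∀ a ∈ P i, ∀ b ∈ P j, a < b)
    (J : Fin k → Set ℝ) (hJm : ∀ j, MeasurableSet (J j))
    (hJord : ∀ i j : Fin k, i < j → ∀ a ∈ J i, ∀ b ∈ J j, a < b)
    (hfib : ∀ i j : Fin k, ∀ x ∈ P i, 0 < Γx x (J j)) :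
    (∏ i : Fin k, (∫⁻ x in P i, Γx x (J (A i)))) ≤
        (k.factorial : ℝ≥0∞) * Measure.pi (fun _ : Fin k => Γ) (patternSet A) ∧
      0 < ∏ i : Fin k, (∫⁻ x in P i, Γx x (J (A i))) := by
  refine ⟨?_, CanonicallyOrderedAdd.prod_pos.2 fun i _ => ?_⟩
  · calc ∏ i, ∫⁻ x in P i, Γx x (J (A i)) = ∏ i, Γ (P i ×ˢ J (A i)) :=
          Finset.prod_congr rfl fun i _ => (measure_prod_eq_setLIntegral_of_disintegration hdis
            (hPm i) (hJm (A i)) (hPsub i)).symm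
      _ ≤ Measure.pi (fun _ => Γ) (univ.pi fun i => P i ×ˢ J (A i)) := prod_le_pi_univ_pi _ _
      _ ≤ Measure.pi (fun _ => Γ) (patternSet A) :=
          measure_mono (pi_prod_subset_patternSet A hPord hJord)
      _ ≤ _ := le_mul_of_one_le_left' (by exact_mod_cast k.factorial_pos)
  · have hf : Measurable fun x => Γx x (J (A i)) :=
      (Measure.measurable_coe (hJm _)).comp hmeas
    have hsupp : P i ⊆ Function.support fun x => Γx x (J (A i)) :=
      fun x hx => (hfib i (A i) x hx).ne'
    rw [setLIntegral_pos_iff hf, inter_eq_right.2 hsupp]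
    exact hPpos i

/-- If there are horizontally ordered sets `P 1 < … < P k` of positive
measure and vertically ordered disjoint intervals `J 1 < … < J k` such that every
fiber over `P i` gives positive mass to every `J j`, then
`t(A,Γ) ≥ ∏ i, ∫_{P i} Γx x (J (A i)) dx > 0`. -/
theorem stmt6 (k : ℕ) (A : Equiv.Perm (Fin k)) (Γ : Measure (ℝ × ℝ))
    (Γx : ℝ → Measure ℝ) (hmeas : Measurable Γx)
    (hdis : ∀ B : Set (ℝ × ℝ), MeasurableSet B →
      Γ B = ∫⁻ x in Icc (0 : ℝ) 1, Γx x {y | (x, y) ∈ B})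
    (P : Fin k → Set ℝ) (hPm : ∀ i, MeasurableSet (P i))
    (hPsub : ∀ i, P i ⊆ Icc 0 1) (hPpos : ∀ i, 0 < volume (P i))
    (hPord : ∀ i j : Fin k, i < j → ∀ a ∈ P i, ∀ b ∈ P j, a < b)
    (J : Fin k → Set ℝ) (hJint : ∀ j, (J j).OrdConnected) (hJm : ∀ j, MeasurableSet (J j))
    (hJord : ∀ i j : Fin k, i < j → ∀ a ∈ J i, ∀ b ∈ J j, a < b)
    (hfib : ∀ i j : Fin k, ∀ x ∈ P i, 0 < Γx x (J j)) :
    (∏ i : Fin k, (∫⁻ x in P i, Γx x (J (A i)))) ≤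
        (k.factorial : ℝ≥0∞) * Measure.pi (fun _ : Fin k => Γ) (patternSet A) ∧
      0 < ∏ i : Fin k, (∫⁻ x in P i, Γx x (J (A i))) :=
  stmt6_general k A Γ Γx hmeas hdis P hPm hPsub hPpos hPord J hJm hJord hfib
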